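/- arXiv:2003.04076 — 9 statements merged into one kernel-verified Lean document; each statement's English description precedes it below -/
import Mathlib

section
/- Let A = {0, a, b} with 0 < a < b coprime. Then for every N ≥ 1, NA = {0, ..., bN} \ (E(A) ∪ (bN - E(b-A))), where E(S) denotes the set of nonnegative integers not representable as a nonnegative integer combination of elements of S. -/
/-- The `N`-fold sumset of a set of integers. -/
def nfold (A : Set ℤ) (N : ℕ) : Set ℤ :=
  {x | ∃ f : Fin N → ℤ, (∀ i, f i ∈ A) ∧ ∑ i, f i = x}

/-- Nonnegative integer combinations of the elements of a finite set of integers. -/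
def combos (A : Finset ℤ) : Set ℤ :=
  {n | ∃ c : ℤ → ℕ, ∑ a ∈ A, (c a : ℤ) * a = n}

/-- The exceptional set: nonnegative integers not representable. -/
def excep (A : Finset ℤ) : Set ℤ :=
  {n | 0 ≤ n ∧ n ∉ combos A}

/-!
Write `x ∈ NA` as `x = i a + j b` with `i + j ≤ N`; then `bN - x = i (b - a) + (N - i - j) b`,
which gives one inclusion. Conversely, if `x = i a + j b` and `bN - x = k (b - a) + l b`, reduce
both representations so that `i, k < b`. Then `x = k a + (N - k - l) b` as well, and since
`gcd(a, b) = 1` the coefficient of `a` in such a representation is determined modulo `b`,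
so `i = k`, `j = N - k - l` and `i + j = N - l ≤ N`.
-/

open scoped Pointwise

theorem combos_eq_closure (s : Finset ℤ) : combos s = AddSubmonoid.closure (s : Set ℤ) := by
  ext n
  rw [SetLike.mem_coe, AddSubmonoid.mem_closure_finset]
  constructor
  · rintro ⟨c, rfl⟩
    refine ⟨fun t => if t ∈ s then c t else 0, fun t ht => ?_,
      Finset.sum_congr rfl fun t ht => ?_⟩
    · by_contra hts
      exact ht (if_neg hts)
    · simp [ht]
  · rintro ⟨c, -, rfl⟩
    exact ⟨c, by simp⟩

theorem mem_combos_insert_zero_pair {u v n : ℤ} :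
    n ∈ combos {0, u, v} ↔ ∃ i j : ℕ, (i : ℤ) * u + (j : ℤ) * v = n := by
  rw [combos_eq_closure, Finset.coe_insert, AddSubmonoid.closure_insert_zero, Finset.coe_pair,
    SetLike.mem_coe, AddSubmonoid.mem_closure_pair]
  simp only [nsmul_eq_mul]

theorem nfold_zero (A : Set ℤ) : nfold A 0 = {0} := by
  ext x
  simp [nfold, eq_comm]

theorem nfold_succ (A : Set ℤ) (N : ℕ) : nfold A (N + 1) = A + nfold A N := by
  ext x
  rw [Set.mem_add]
  constructor
  · rintro ⟨f, hf, rfl⟩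
    exact ⟨f 0, hf 0, _, ⟨Fin.tail f, fun i => hf _, rfl⟩, (Fin.sum_univ_succ f).symm⟩
  · rintro ⟨y, hy, _, ⟨f, hf, rfl⟩, rfl⟩
    exact ⟨Fin.cons y f, Fin.cases hy hf, Fin.sum_cons y f⟩

theorem mem_nfold_insert_zero_pair {a b x : ℤ} {N : ℕ} :
    x ∈ nfold {0, a, b} N ↔ ∃ i j : ℕ, i + j ≤ N ∧ (i : ℤ) * a + (j : ℤ) * b = x := by
  induction N generalizing x with
  | zero => simp [nfold_zero, eq_comm]
  | succ N ih =>
    simp only [nfold_succ, Set.mem_add, ih, Set.mem_insert_iff, Set.mem_singleton_iff]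
    constructor
    · rintro ⟨y, hy, _, ⟨i, j, hij, rfl⟩, rfl⟩
      rcases hy with rfl | rfl | rfl
      · exact ⟨i, j, by omega, by ring⟩
      · exact ⟨i + 1, j, by omega, by push_cast; ring⟩
      · exact ⟨i, j + 1, by omega, by push_cast; ring⟩
    · rintro ⟨_ | i, j, hij, rfl⟩
      · rcases j with _ | j
        · exact ⟨0, Or.inl rfl, 0, ⟨0, 0, by omega, by ring⟩, by ring⟩
        · exact ⟨b, by simp, _, ⟨0, j, by omega, rfl⟩, by push_cast; ring⟩
      · exact ⟨a, by simp, _, ⟨i, j, by omega, rfl⟩, by push_cast; ring⟩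

theorem exists_mul_add_mul_eq_of_coeff_lt {u v n : ℤ} (hu : 0 ≤ u) (hv : 0 < v) {i j : ℕ}
    (h : (i : ℤ) * u + (j : ℤ) * v = n) :
    ∃ i' j' : ℕ, (i' : ℤ) < v ∧ (i' : ℤ) * u + (j' : ℤ) * v = n := by
  lift u to ℕ using hu
  lift v to ℕ using hv.le
  refine ⟨i % v, j + i / v * u, by exact_mod_cast Nat.mod_lt i (by exact_mod_cast hv), ?_⟩
  rw [← h]
  have := Nat.mod_add_div i v
  zify at this
  push_cast
  linear_combination u * this

theorem eq_of_mul_add_mul_eq_of_lt {a b i k j l : ℤ} (hcop : IsCoprime a b)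
    (hi : 0 ≤ i) (hib : i < b) (hk : 0 ≤ k) (hkb : k < b)
    (h : i * a + j * b = k * a + l * b) : i = k := by
  have hdvd : b ∣ i - k :=
    hcop.symm.dvd_of_dvd_mul_right ⟨l - j, by linear_combination h⟩
  exact sub_eq_zero.mp (Int.eq_zero_of_abs_lt_dvd hdvd (abs_sub_lt_iff.mpr ⟨by omega, by omega⟩))

theorem mem_excep {x : ℤ} {s : Finset ℤ} : x ∈ excep s ↔ 0 ≤ x ∧ x ∉ combos s :=
  Iff.rfl

theorem mem_image_sub_excep {c x : ℤ} {s : Finset ℤ} :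
    x ∈ (fun e => c - e) '' excep s ↔ x ≤ c ∧ c - x ∉ combos s := by
  constructor
  · rintro ⟨e, ⟨he, hes⟩, rfl⟩
    exact ⟨by simp only; omega, by rwa [sub_sub_cancel]⟩
  · rintro ⟨hx, hxs⟩
    exact ⟨c - x, ⟨by omega, hxs⟩, sub_sub_cancel c x⟩

theorem image_sub_insert_zero_pair (a b : ℤ) :
    ({0, a, b} : Finset ℤ).image (b - ·) = {0, b - a, b} := by
  rw [Finset.image_insert, Finset.image_insert, Finset.image_singleton, sub_zero, sub_self,
    Finset.pair_comm _ 0, Finset.insert_comm, Finset.pair_comm]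

theorem mem_nfold_iff_mem_combos {a b x : ℤ} {N : ℕ} (ha : 0 ≤ a) (hab : a < b)
    (hcop : IsCoprime a b) :
    x ∈ nfold {0, a, b} N ↔
      0 ≤ x ∧ x ≤ N * b ∧ x ∈ combos {0, a, b} ∧ N * b - x ∈ combos {0, b - a, b} := by
  simp only [mem_nfold_insert_zero_pair, mem_combos_insert_zero_pair]
  constructor
  · rintro ⟨i, j, hij, rfl⟩
    have hij' : (i : ℤ) + j ≤ N := by exact_mod_cast hij
    refine ⟨by nlinarith, by nlinarith, ⟨i, j, rfl⟩, i, N - i - j, ?_⟩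
    rw [Nat.cast_sub (by omega), Nat.cast_sub (by omega)]
    ring
  · rintro ⟨-, -, ⟨i₀, j₀, hx⟩, ⟨k₀, l₀, hy⟩⟩
    obtain ⟨i, j, hib, rfl⟩ := exists_mul_add_mul_eq_of_coeff_lt ha (by omega) hx
    obtain ⟨k, l, hkb, hy⟩ := exists_mul_add_mul_eq_of_coeff_lt (by omega) (by omega) hy
    have hrep : (i : ℤ) * a + j * b = k * a + (N - k - l) * b := by linear_combination hy
    obtain rfl : i = k := by
      exact_mod_cast eq_of_mul_add_mul_eq_of_lt hcop (by positivity) hib (by positivity) hkb hrep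
    have hj : (j : ℤ) = N - i - l := by
      refine mul_right_cancel₀ (by omega : b ≠ 0) ?_
      linear_combination hrep
    exact ⟨i, j, by omega, rfl⟩

theorem stmt3_general (a b : ℤ) (ha : 0 < a) (hab : a < b) (hcop : Int.gcd a b = 1)
    (N : ℕ) :
    nfold (↑({0, a, b} : Finset ℤ)) N =
      {n : ℤ | 0 ≤ n ∧ n ≤ (N : ℤ) * b} \
        (excep ({0, a, b} : Finset ℤ) ∪
          (fun e => (N : ℤ) * b - e) ''
            excep (({0, a, b} : Finset ℤ).image (fun x => b - x))) := by
  ext x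
  rw [Finset.coe_insert, Finset.coe_pair,
    mem_nfold_iff_mem_combos ha.le hab (Int.isCoprime_iff_gcd_eq_one.mpr hcop),
    image_sub_insert_zero_pair]
  simp only [Set.mem_sdiff, Set.mem_ofPred_eq, Set.mem_union, mem_excep,
    mem_image_sub_excep]
  tauto

/-- For `A = {0, a, b}` with `0 < a < b` coprime and every `N ≥ 1`,
`NA = {0, …, bN} \ (E(A) ∪ (bN - E(b-A)))`. -/
theorem stmt3 (a b : ℤ) (ha : 0 < a) (hab : a < b) (hcop : Int.gcd a b = 1)
    (N : ℕ) (hN : 1 ≤ N) :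
    nfold (↑({0, a, b} : Finset ℤ)) N =
      {n : ℤ | 0 ≤ n ∧ n ≤ (N : ℤ) * b} \
        (excep ({0, a, b} : Finset ℤ) ∪
          (fun e => (N : ℤ) * b - e) ''
            excep (({0, a, b} : Finset ℤ).image (fun x => b - x))) :=
  stmt3_general a b ha hab hcop N
end

section
/- Let A = {0, 1, b-1, b} with b ≥ 4. Then E(A) and E(b-A) are both empty, b - 2 ∈ (b-2)A, but b - 2 ∉ (b-3)A. -/
lemma excep_empty_of_one_mem (A : Finset ℤ) (h1 : (1 : ℤ) ∈ A) : excep A = ∅ := by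
  ext n
  simp only [excep, Set.mem_setOf_eq, Set.mem_empty_iff_false, iff_false, not_and, not_not]
  intro hn
  refine ⟨fun a => if a = 1 then n.toNat else 0, ?_⟩
  rw [Finset.sum_eq_single_of_mem 1 h1]
  · simp [Int.toNat_of_nonneg hn]
  · intro a _ ha
    simp [ha]

/-- For `A = {0, 1, b-1, b}` with `b ≥ 4`: `E(A)` and `E(b-A)` are
empty, `b-2 ∈ (b-2)A`, but `b-2 ∉ (b-3)A`. -/
theorem stmt5 (b : ℤ) (hb : 4 ≤ b) :
    excep ({0, 1, b - 1, b} : Finset ℤ) = ∅ ∧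
    excep (({0, 1, b - 1, b} : Finset ℤ).image (fun x => b - x)) = ∅ ∧
    b - 2 ∈ nfold (↑({0, 1, b - 1, b} : Finset ℤ)) (b - 2).toNat ∧
    b - 2 ∉ nfold (↑({0, 1, b - 1, b} : Finset ℤ)) (b - 3).toNat := by
  refine ⟨excep_empty_of_one_mem _ (by simp), excep_empty_of_one_mem _ ?_, ?_, ?_⟩
  · refine Finset.mem_image.mpr ⟨b - 1, by simp, by ring⟩
  · refine ⟨fun _ => 1, fun i => by simp, ?_⟩
    simp [Finset.sum_const, Int.toNat_of_nonneg (by omega : (0:ℤ) ≤ b - 2)]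
  · rintro ⟨f, hf, hsum⟩
    have hmem : ∀ i, f i = 0 ∨ f i = 1 ∨ f i = b - 1 ∨ f i = b := by
      intro i
      have := hf i
      simpa using this
    by_cases hbig : ∃ i, b - 1 ≤ f i
    · obtain ⟨i, hi⟩ := hbig
      have h1 : f i ≤ ∑ j, f j := by
        apply Finset.single_le_sum (f := f) (fun j _ => ?_) (Finset.mem_univ i)
        rcases hmem j with h | h | h | h <;> omega
      omega
    · push_neg at hbig
      have hle : ∀ i, f i ≤ 1 := by
        intro i; rcases hmem i with h | h | h | h <;> [omega; omega; skip; skip] <;>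
          (exfalso; have := hbig i; omega)
      have := Finset.sum_le_card_nsmul Finset.univ f 1 (fun i _ => hle i)
      simp only [Finset.card_univ, Fintype.card_fin, nsmul_eq_mul, mul_one] at this
      rw [hsum] at this
      have : ((b - 3).toNat : ℤ) = b - 3 := Int.toNat_of_nonneg (by omega)
      omega
end

section
/- With A as above and n_{a,A}, N_{a,A} := min{N ≥ 0 : n_{a,A} ∈ NA}, one has the inequality b · N_{a,A} ≥ n_{a,A} + n_{b-a, b-A}. -/
/-! The reflection `x ↦ b - x` turns an `N`-fold sum `n` of elements of `A` into the `N`-fold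
sum `N b - n` of elements of `b - A`. For `n = n_{a,A}` and `N = N_{a,A}` this is a nonnegative
element of `P(b - A)` congruent to `b - a`, hence at least `n_{b-a,b-A}`. -/

theorem nfold_subset_combos (S : Finset ℤ) (N : ℕ) : nfold (↑S) N ⊆ combos S := by
  rintro _ ⟨f, hf, rfl⟩
  refine ⟨fun x => (Finset.univ.filter (fun i => f i = x)).card, ?_⟩
  rw [← Finset.sum_fiberwise_of_maps_to (t := S) (g := f) (fun i _ => hf i) f]
  refine Finset.sum_congr rfl fun x _ => ?_
  rw [Finset.sum_congr rfl (fun i hi => (Finset.mem_filter.mp hi).2)]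
  simp [mul_comm]

theorem le_mul_of_mem_nfold {A : Set ℤ} {b : ℤ} (hA : ∀ x ∈ A, x ≤ b) {N : ℕ} {x : ℤ}
    (hx : x ∈ nfold A N) : x ≤ N * b := by
  obtain ⟨f, hf, rfl⟩ := hx
  simpa using Finset.sum_le_sum fun i (_ : i ∈ Finset.univ) => hA _ (hf i)

theorem sub_mem_nfold_image {A : Set ℤ} (b : ℤ) {N : ℕ} {x : ℤ} (hx : x ∈ nfold A N) :
    N * b - x ∈ nfold ((fun y => b - y) '' A) N := by
  obtain ⟨f, hf, rfl⟩ := hx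
  exact ⟨fun i => b - f i, fun i => ⟨f i, hf i, rfl⟩, by simp [Finset.sum_sub_distrib]⟩

theorem stmt7_general (A : Finset ℤ) (b : ℤ)
    (hbound : ∀ x ∈ A, 0 ≤ x ∧ x ≤ b)
    (a : ℤ)
    (na : ℤ) (hna : IsLeast {n : ℤ | 0 ≤ n ∧ n ≡ a [ZMOD b] ∧ n ∈ combos A} na)
    (Na : ℕ) (hNa : IsLeast {N : ℕ | na ∈ nfold (↑A) N} Na)
    (nba : ℤ)
    (hnba : IsLeast {m : ℤ | 0 ≤ m ∧ m ≡ (b - a) [ZMOD b] ∧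
      m ∈ combos (A.image (fun x => b - x))} nba) :
    na + nba ≤ b * (Na : ℤ) := by
  have hreflect : (Na : ℤ) * b - na ∈ combos (A.image (fun x => b - x)) :=
    nfold_subset_combos _ Na (by rw [Finset.coe_image]; exact sub_mem_nfold_image b hNa.1)
  have hnonneg : 0 ≤ (Na : ℤ) * b - na :=
    sub_nonneg.2 (le_mul_of_mem_nfold (fun x hx => (hbound x hx).2) hNa.1)
  have hmod : (Na : ℤ) * b - na ≡ b - a [ZMOD b] :=
    (Int.modEq_iff_dvd.2 ⟨1 - Na, by ring⟩).sub hna.1.2.1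
  linarith [hnba.2 ⟨hnonneg, hmod, hreflect⟩]

/-- With `n_{a,A}` the least `n ≥ 0` with `n ≡ a (mod b)` in `P(A)`,
`N_{a,A}` the least `N` with `n_{a,A} ∈ NA`, and `n_{b-a,b-A}` analogously, we
have `b * N_{a,A} ≥ n_{a,A} + n_{b-a,b-A}`. -/
theorem stmt7 (A : Finset ℤ) (b : ℤ) (h0 : 0 ∈ A) (hb : b ∈ A)
    (hbound : ∀ x ∈ A, 0 ≤ x ∧ x ≤ b) (hgcd : A.gcd id = 1)
    (a : ℤ) (ha0 : 0 ≤ a) (hab : a ≤ b - 1)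
    (na : ℤ) (hna : IsLeast {n : ℤ | 0 ≤ n ∧ n ≡ a [ZMOD b] ∧ n ∈ combos A} na)
    (Na : ℕ) (hNa : IsLeast {N : ℕ | na ∈ nfold (↑A) N} Na)
    (nba : ℤ)
    (hnba : IsLeast {m : ℤ | 0 ≤ m ∧ m ≡ (b - a) [ZMOD b] ∧
      m ∈ combos (A.image (fun x => b - x))} nba) :
    na + nba ≤ b * (Na : ℤ) :=
  stmt7_general A b hbound a na hna Na hNa nba hnba
end

section
/- Let A be a finite set of integers with min 0, max b, gcd 1. Fix 1 ≤ a ≤ b-1. If n ≤ (N - N_{a,A})·b with n ≡ a (mod b) and n ∈ P(A), then n ∈ NA. -/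
lemma nfold_add {A : Set ℤ} {M K : ℕ} {x y : ℤ}
    (hx : x ∈ nfold A M) (hy : y ∈ nfold A K) : x + y ∈ nfold A (M + K) := by
  obtain ⟨f, hf, hfs⟩ := hx
  obtain ⟨g, hg, hgs⟩ := hy
  refine ⟨Fin.append f g, ?_, ?_⟩
  · intro i
    refine Fin.addCases (motive := fun i => Fin.append f g i ∈ A) ?_ ?_ i
    · intro j; simpa using hf j
    · intro j; simpa using hg j
  · rw [Fin.sum_univ_add]
    simp [hfs, hgs]

lemma nfold_const {A : Set ℤ} {c : ℤ} (hc : c ∈ A) (k : ℕ) :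
    (k : ℤ) * c ∈ nfold A k :=
  ⟨fun _ => c, fun _ => hc, by simp [mul_comm]⟩

/-- Proposition on filling in: with `1 ≤ a ≤ b-1`, if
`n ≤ (N - N_{a,A})·b`, `n ≡ a (mod b)` and `n ∈ P(A)`, then `n ∈ NA`. -/
theorem stmt9 (A : Finset ℤ) (b : ℤ) (h0 : 0 ∈ A) (hb : b ∈ A)
    (hbound : ∀ x ∈ A, 0 ≤ x ∧ x ≤ b) (hgcd : A.gcd id = 1)
    (a : ℤ) (ha1 : 1 ≤ a) (hab : a ≤ b - 1)
    (na : ℤ) (hna : IsLeast {n : ℤ | 0 ≤ n ∧ n ≡ a [ZMOD b] ∧ n ∈ combos A} na)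
    (Na : ℕ) (hNa : IsLeast {N : ℕ | na ∈ nfold (↑A) N} Na)
    (N : ℕ) (n : ℤ) (hmod : n ≡ a [ZMOD b]) (hP : n ∈ combos A)
    (hle : n ≤ ((N : ℤ) - (Na : ℤ)) * b) :
    n ∈ nfold (↑A) N := by
  have hbpos : 0 < b := by linarith
  -- n is nonnegative
  have hn0 : 0 ≤ n := by
    obtain ⟨c, hc⟩ := hP
    rw [← hc]
    exact Finset.sum_nonneg fun x hx =>
      mul_nonneg (Int.natCast_nonneg _) (hbound x hx).1
  -- na ≤ n
  have hnan : na ≤ n := hna.2 ⟨hn0, hmod, hP⟩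
  -- b ∣ n - na
  have hdvd : b ∣ n - na := (hna.1.2.1.trans hmod.symm).dvd
  obtain ⟨k0, hk0⟩ := hdvd
  have hk00 : 0 ≤ k0 := by
    by_contra h
    push_neg at h
    nlinarith
  -- bound on k0
  have hk0le : (Na : ℤ) + k0 ≤ N := by
    have hna0 : 0 ≤ na := hna.1.1
    have : b * k0 ≤ ((N : ℤ) - Na) * b := by linarith
    nlinarith
  set k := k0.toNat with hk
  have hk0' : (k : ℤ) = k0 := Int.toNat_of_nonneg hk00
  have hNle : Na + k ≤ N := by omega
  have hsplit : N = Na + k + (N - (Na + k)) := by omega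
  rw [hsplit]
  have h1 : na + (k : ℤ) * b ∈ nfold (↑A) (Na + k) :=
    nfold_add hNa.1 (nfold_const hb k)
  have h2 : ((N - (Na + k) : ℕ) : ℤ) * 0 ∈ nfold (↑A : Set ℤ) (N - (Na + k)) :=
    nfold_const h0 _
  have := nfold_add h1 h2
  have hn : n = na + (k : ℤ) * b + ((N - (Na + k) : ℕ) : ℤ) * 0 := by
    rw [hk0']; ring_nf; linarith [hk0]
  rwa [hn]
end

section
/- Let A be as above. If N ≥ 2b - 2 and 0 ≤ n ≤ Nb with n ∉ E(A) ∪ (Nb - E(b-A)), then n ∈ NA. -/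
/-!
A representation of `n` as a sum of elements of `A ⊆ [0, b]` with the fewest summands uses
fewer than `b` summands other than `b`: among any `b` of them some nonempty subfamily has sum
`k * b` (pigeonhole on prefix sums modulo `b`), and since these summands are `< b` there are more
than `k` of them, so replacing them by `k` copies of `b` would shorten the representation. Hence
`n` needs at most `n / b + b - 1` summands, which is at most `N` when `2 n ≤ N b` and
`N ≥ 2 b - 2`; padding with zeros gives `n ∈ NA`. When `2 n > N b`, the same argument applies to
`N b - n` and `b - A`, and `a ↦ b - a` carries `N(b - A)` back to `N b - NA`.
-/

theorem Multiset.exists_le_ne_zero_intCast_dvd_sum {n : ℕ} (hn : 0 < n) {l : Multiset ℤ}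
    (hl : n ≤ card l) : ∃ u ≤ l, u ≠ 0 ∧ (n : ℤ) ∣ u.sum := by
  have : NeZero n := NeZero.of_pos hn
  set L := l.toList
  obtain ⟨i, j, hij, heq⟩ := Fintype.exists_ne_map_eq_of_card_lt
    (fun i : Fin (n + 1) => ((L.take i).sum : ZMod n)) (by simp)
  wlog hlt : i < j generalizing i j
  · exact this j i hij.symm heq.symm (lt_of_le_of_ne (not_lt.1 hlt) hij.symm)
  obtain ⟨w, hw⟩ := List.take_prefix_take_left (l := L) hlt.le
  have hlen : L.length = card l := Multiset.length_toList l
  refine ⟨w, ?_, ?_, ?_⟩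
  · rw [← Multiset.coe_toList l, Multiset.coe_le]
    exact ((hw ▸ List.suffix_append _ _).sublist.trans (List.take_sublist _ _)).subperm
  · have := congrArg List.length hw
    simp only [List.length_append, List.length_take] at this
    have := i.isLt; have := j.isLt
    rw [Ne, Multiset.coe_eq_zero, ← List.length_eq_zero_iff]
    omega
  · have hdvd := (ZMod.intCast_eq_intCast_iff_dvd_sub _ _ n).1 heq
    rwa [← hw, List.sum_append, add_sub_cancel_left] at hdvd

theorem Multiset.mul_card_le_sum_add_mul_card_filter_ne {m : Multiset ℤ} (hm : ∀ x ∈ m, 0 ≤ x)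
    (b : ℤ) : b * card m ≤ m.sum + b * card (m.filter (· ≠ b)) := by
  have hcard : card m = count b m + card (m.filter (· ≠ b)) := by
    rw [← card_replicate (count b m) b, ← filter_eq', ← card_add, filter_add_not]
  have hsum : m.sum = count b m • b + (m.filter (· ≠ b)).sum := by
    rw [← sum_replicate, ← filter_eq', ← sum_add, filter_add_not]
  have hrest : 0 ≤ (m.filter (· ≠ b)).sum :=
    sum_nonneg fun x hx => hm x (mem_of_mem_filter hx)
  rw [hcard, hsum, nsmul_eq_mul]
  push_cast
  linarith

section nfold

variable {S : Set ℤ}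

theorem Multiset.sum_mem_nfold {m : Multiset ℤ} (hm : ∀ x ∈ m, x ∈ S) :
    m.sum ∈ nfold S (card m) := by
  induction m using Multiset.induction_on with
  | empty =>
    rw [card_zero, sum_zero]
    exact ⟨Fin.elim0, fun i => i.elim0, by simp⟩
  | cons a s ih =>
    obtain ⟨f, hf, hfs⟩ := ih fun x hx => hm x (mem_cons_of_mem hx)
    rw [card_cons, sum_cons]
    refine ⟨Fin.cons a f, Fin.cases (hm a (mem_cons_self a s)) hf, ?_⟩
    rw [Fin.sum_cons, hfs]

theorem Multiset.sum_mem_nfold_of_card_le (h0 : 0 ∈ S) {m : Multiset ℤ} (hm : ∀ x ∈ m, x ∈ S)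
    {N : ℕ} (hN : card m ≤ N) : m.sum ∈ nfold S N := by
  have hpad : ∀ x ∈ m + replicate (N - card m) 0, x ∈ S := by
    intro x hx
    rcases mem_add.1 hx with hx | hx
    · exact hm x hx
    · rwa [eq_of_mem_replicate hx]
  simpa [Nat.add_sub_cancel' hN] using sum_mem_nfold hpad

variable {b : ℤ} (hb : 0 < b) (hbS : b ∈ S) (hS : ∀ x ∈ S, 0 ≤ x ∧ x ≤ b)
include hb hbS hS

theorem exists_sum_eq_card_lt_of_le_card_filter_ne {m : Multiset ℤ} (hm : ∀ x ∈ m, x ∈ S)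
    (hmany : b ≤ Multiset.card (m.filter (· ≠ b))) :
    ∃ m' : Multiset ℤ, (∀ x ∈ m', x ∈ S) ∧ m'.sum = m.sum ∧
      Multiset.card m' < Multiset.card m := by
  lift b to ℕ using hb.le
  obtain ⟨u, hu, hu0, k, hk⟩ :=
    Multiset.exists_le_ne_zero_intCast_dvd_sum (by exact_mod_cast hb) (by exact_mod_cast hmany)
  have hum : u ≤ m := hu.trans (Multiset.filter_le _ m)
  have hu_small : ∀ x ∈ u, 0 ≤ x ∧ x ≤ b - 1 := fun x hx => by
    obtain ⟨hxm, hxb⟩ := Multiset.mem_filter.1 (Multiset.mem_of_le hu hx)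
    have := hS x (hm x hxm)
    omega
  have hk0 : 0 ≤ k := by
    have := Multiset.sum_nonneg fun x hx => (hu_small x hx).1
    nlinarith
  have hku : k < Multiset.card u := by
    have hle := Multiset.sum_le_card_nsmul u (b - 1) fun x hx => (hu_small x hx).2
    have hpos := Multiset.card_pos.2 hu0
    rw [nsmul_eq_mul] at hle
    nlinarith
  lift k to ℕ using hk0
  refine ⟨(m - u) + Multiset.replicate k (b : ℤ), fun x hx => ?_, ?_, ?_⟩
  · rcases Multiset.mem_add.1 hx with hx | hx
    · exact hm x (Multiset.mem_of_le (Multiset.sub_le_self m u) hx)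
    · rwa [Multiset.eq_of_mem_replicate hx]
  · conv_rhs => rw [← tsub_add_cancel_of_le hum]
    rw [Multiset.sum_add, Multiset.sum_add, Multiset.sum_replicate, hk, nsmul_eq_mul, mul_comm]
  · have := congrArg Multiset.card (tsub_add_cancel_of_le hum)
    rw [Multiset.card_add, Multiset.card_replicate]
    rw [Multiset.card_add] at this
    omega

theorem exists_sum_eq_card_filter_ne_lt {m : Multiset ℤ} (hm : ∀ x ∈ m, x ∈ S) :
    ∃ m' : Multiset ℤ, (∀ x ∈ m', x ∈ S) ∧ m'.sum = m.sum ∧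
      (Multiset.card (m'.filter (· ≠ b)) : ℤ) < b := by
  induction hc : Multiset.card m using Nat.strong_induction_on generalizing m with
  | _ c ih =>
    by_cases hfew : (Multiset.card (m.filter (· ≠ b)) : ℤ) < b
    · exact ⟨m, hm, rfl, hfew⟩
    obtain ⟨m₁, hm₁, hsum₁, hcard₁⟩ :=
      exists_sum_eq_card_lt_of_le_card_filter_ne hb hbS hS hm (not_lt.1 hfew)
    obtain ⟨m', hm', hsum', hfew'⟩ := ih _ (hc ▸ hcard₁) hm₁ rfl
    exact ⟨m', hm', hsum'.trans hsum₁, hfew'⟩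

theorem Multiset.sum_mem_nfold_of_two_mul_sum_le (h0 : 0 ∈ S) {N : ℕ} (hN : 2 * b - 2 ≤ N)
    {m : Multiset ℤ} (hm : ∀ x ∈ m, x ∈ S) (hsum : 2 * m.sum ≤ N * b) :
    m.sum ∈ nfold S N := by
  obtain ⟨m', hm', hsum', hfew⟩ := exists_sum_eq_card_filter_ne_lt hb hbS hS hm
  have hcount := mul_card_le_sum_add_mul_card_filter_ne (fun x hx => (hS x (hm' x hx)).1) b
  have hcard : b * card m' ≤ b * N := by nlinarith
  rw [← hsum']
  exact sum_mem_nfold_of_card_le h0 hm' (by exact_mod_cast le_of_mul_le_mul_left hcard hb)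

end nfold

theorem exists_multiset_sum_eq_of_mem_combos {A : Finset ℤ} {n : ℤ} (hn : n ∈ combos A) :
    ∃ m : Multiset ℤ, (∀ x ∈ m, x ∈ A) ∧ m.sum = n := by
  obtain ⟨c, rfl⟩ := hn
  refine ⟨∑ a ∈ A, Multiset.replicate (c a) a, fun x hx => ?_, ?_⟩
  · obtain ⟨a, ha, hx⟩ := Multiset.mem_sum.1 hx
    rwa [Multiset.eq_of_mem_replicate hx]
  · simp [Multiset.sum_sum, Multiset.sum_replicate]

theorem mem_nfold_of_mem_combos {A : Finset ℤ} {b : ℤ} (hb : 0 < b) (h0 : 0 ∈ A) (hbA : b ∈ A)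
    (hA : ∀ x ∈ A, 0 ≤ x ∧ x ≤ b) {N : ℕ} (hN : 2 * b - 2 ≤ N) {n : ℤ} (hn : n ∈ combos A)
    (hnN : 2 * n ≤ N * b) : n ∈ nfold A N := by
  obtain ⟨m, hm, rfl⟩ := exists_multiset_sum_eq_of_mem_combos hn
  exact m.sum_mem_nfold_of_two_mul_sum_le hb hbA hA h0 hN hm hnN

theorem sub_mem_nfold_of_mem_nfold_image_sub {A : Finset ℤ} {b x : ℤ} {N : ℕ}
    (hx : x ∈ nfold ↑(A.image (b - ·)) N) : N * b - x ∈ nfold A N := by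
  obtain ⟨f, hf, rfl⟩ := hx
  refine ⟨fun i => b - f i, fun i => ?_, ?_⟩
  · obtain ⟨a, ha, hfa⟩ := Finset.mem_image.1 (hf i)
    simpa [← hfa] using ha
  · simp [Finset.sum_sub_distrib, mul_comm]

theorem stmt10_general (A : Finset ℤ) (b : ℤ) (h0 : 0 ∈ A) (hb : b ∈ A)
    (hbound : ∀ x ∈ A, 0 ≤ x ∧ x ≤ b)
    (N : ℕ) (hN : 2 * b - 2 ≤ (N : ℤ))
    (n : ℤ) (hn0 : 0 ≤ n) (hnN : n ≤ (N : ℤ) * b)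
    (hnE : n ∉ excep A)
    (hnE' : n ∉ (fun e => (N : ℤ) * b - e) '' excep (A.image (fun a => b - a))) :
    n ∈ nfold (↑A) N := by
  obtain rfl | hbpos := (hbound b hb).1.eq_or_lt
  · obtain rfl : n = 0 := by simp only [mul_zero] at hnN; omega
    exact (0 : Multiset ℤ).sum_mem_nfold_of_card_le h0 (by simp) (Nat.zero_le N)
  by_cases hsmall : 2 * n ≤ N * b
  · exact mem_nfold_of_mem_combos hbpos h0 hb hbound hN (of_not_not fun h => hnE ⟨hn0, h⟩) hsmall
  have hA' : ∀ x ∈ A.image (b - ·), 0 ≤ x ∧ x ≤ b :=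
    Finset.forall_mem_image.2 fun a ha => by have := hbound a ha; omega
  have hm : N * b - n ∈ combos (A.image (b - ·)) :=
    of_not_not fun h => hnE' ⟨_, ⟨by linarith, h⟩, by ring⟩
  have := mem_nfold_of_mem_combos hbpos (Finset.mem_image.2 ⟨b, hb, sub_self b⟩)
    (Finset.mem_image.2 ⟨0, h0, sub_zero b⟩) hA' hN hm (by linarith)
  simpa only [sub_sub_cancel] using sub_mem_nfold_of_mem_nfold_image_sub this

/-- If `N ≥ 2b - 2` and `0 ≤ n ≤ N*b` with
`n ∉ E(A) ∪ (N*b - E(b-A))`, then `n ∈ NA`. -/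
theorem stmt10 (A : Finset ℤ) (b : ℤ) (h0 : 0 ∈ A) (hb : b ∈ A)
    (hbound : ∀ x ∈ A, 0 ≤ x ∧ x ≤ b) (hgcd : A.gcd id = 1)
    (N : ℕ) (hN : 2 * b - 2 ≤ (N : ℤ))
    (n : ℤ) (hn0 : 0 ≤ n) (hnN : n ≤ (N : ℤ) * b)
    (hnE : n ∉ excep A)
    (hnE' : n ∉ (fun e => (N : ℤ) * b - e) '' excep (A.image (fun a => b - a))) :
    n ∈ nfold (↑A) N :=
  stmt10_general A b h0 hb hbound N hN n hn0 hnN hnE hnE'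
end

section
/- (Carathéodory for sumsets) Let A ⊂ ℝ^n be finite with 0 ∈ A and A spanning ℝ^n. If v ∈ N·H(A) (the N-dilate of the convex hull of A), then there exists B ⊆ A with |B| = n+1 such that B - B spans ℝ^n and v ∈ N·H(B). -/
/-!
Write `v = N • w` with `w ∈ H(A)`. By Carathéodory, `w ∈ H(C)` for an affinely independent
`C ⊆ A`. Since `0 ∈ A` and `A` spans, `A` affinely spans the whole space, so `C` can be
extended inside `A` to an affine basis `B`; it has `n + 1` points, `B - B` spans, and
`w ∈ H(C) ⊆ H(B)`.
-/

open Pointwise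

section

variable {k V P : Type*} [DivisionRing k] [AddCommGroup V] [Module k V] [AddTorsor V P]

theorem AffineIndependent.exists_extension_within_affineSpan_eq_top {s t : Set P} {p : P}
    (hp : p ∈ s) (hs : AffineIndependent k ((↑) : s → P)) (hst : s ⊆ t)
    (ht : affineSpan k t = ⊤) :
    ∃ u, s ⊆ u ∧ u ⊆ t ∧ AffineIndependent k ((↑) : u → P) ∧ affineSpan k u = ⊤ := by
  rw [affineIndependent_set_iff_linearIndependent_vsub k hp] at hs
  obtain ⟨b, hbt, hsb, htb, hb⟩ := exists_linearIndepOn_id_extension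
    (t := (· -ᵥ p) '' (t \ {p})) hs (Set.image_mono (Set.sdiff_subset_sdiff_left hst))
  have hb0 : ∀ v ∈ b, v ≠ (0 : V) := fun v hv => hb.ne_zero hv
  have hb_span : Submodule.span k (Set.range ((↑) : b → V)) = ⊤ := by
    rw [Subtype.range_coe, eq_top_iff,
      ← AffineSubspace.vectorSpan_eq_top_of_affineSpan_eq_top k V P ht,
      vectorSpan_eq_span_vsub_set_right_ne k (hst hp)]
    exact Submodule.span_le.mpr htb
  refine ⟨{p} ∪ (· +ᵥ p) '' b, ?_, ?_,
    (linearIndependent_set_iff_affineIndependent_vadd_union_singleton k hb0 p).mp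
      hb.linearIndependent,
    affineSpan_singleton_union_vadd_eq_top_of_span_eq_top p hb_span⟩
  · intro x hx
    by_cases hxp : x = p
    · exact Or.inl hxp
    · exact Or.inr ⟨x -ᵥ p, hsb ⟨x, ⟨hx, hxp⟩, rfl⟩, vsub_vadd x p⟩
  · rintro _ (rfl | ⟨_, hv, rfl⟩)
    · exact hst hp
    · obtain ⟨x, hx, rfl⟩ := hbt hv
      simpa using hx.1

theorem Finset.card_eq_finrank_add_one_of_affineIndependent [FiniteDimensional k V]
    {s : Finset P} (hs : AffineIndependent k ((↑) : s → P))
    (hs_span : affineSpan k (s : Set P) = ⊤) :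
    s.card = Module.finrank k V + 1 := by
  rw [← hs.affineSpan_eq_top_iff_card_eq_finrank_add_one.mp (by simpa using hs_span)]
  simp

end

theorem affineSpan_eq_top_of_zero_mem_of_span_eq_top {k V : Type*} [Ring k] [AddCommGroup V]
    [Module k V] {s : Set V} (h0 : 0 ∈ s) (hs : Submodule.span k s = ⊤) :
    affineSpan k s = ⊤ := by
  rw [AffineSubspace.affineSpan_eq_top_iff_vectorSpan_eq_top_of_nonempty k V V ⟨0, h0⟩,
    vectorSpan_eq_span_vsub_set_right k h0]
  simpa using hs

/-- Carathéodory for sumsets: if `0 ∈ A ⊂ ℝⁿ` finite spans `ℝⁿ`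
and `v ∈ N·H(A)`, then there is `B ⊆ A` with `n+1` elements such that `B - B`
spans `ℝⁿ` and `v ∈ N·H(B)`. -/
theorem stmt13 (n N : ℕ) (A : Finset (Fin n → ℝ)) (h0 : (0 : Fin n → ℝ) ∈ A)
    (hspan : Submodule.span ℝ (A : Set (Fin n → ℝ)) = ⊤)
    (v : Fin n → ℝ) (hv : v ∈ (N : ℝ) • convexHull ℝ (A : Set (Fin n → ℝ))) :
    ∃ B ⊆ A, B.card = n + 1 ∧
      Submodule.span ℝ ((B : Set (Fin n → ℝ)) - (B : Set (Fin n → ℝ))) = ⊤ ∧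
      v ∈ (N : ℝ) • convexHull ℝ (B : Set (Fin n → ℝ)) := by
  obtain ⟨w, hw, rfl⟩ := hv
  obtain ⟨C, hCA, hC, hwC⟩ : ∃ C : Finset (Fin n → ℝ), ↑C ⊆ (A : Set (Fin n → ℝ)) ∧
      AffineIndependent ℝ ((↑) : C → Fin n → ℝ) ∧ w ∈ convexHull ℝ (C : Set (Fin n → ℝ)) := by
    rw [convexHull_eq_union] at hw
    simpa only [Set.mem_iUnion, exists_prop] using hw
  obtain ⟨p, hp⟩ := convexHull_nonempty_iff.mp ⟨w, hwC⟩
  obtain ⟨B, hCB, hBA, hB, hB_span⟩ := hC.exists_extension_within_affineSpan_eq_top hp hCA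
    (affineSpan_eq_top_of_zero_mem_of_span_eq_top (Finset.mem_coe.mpr h0) hspan)
  lift B to Finset (Fin n → ℝ) using A.finite_toSet.subset hBA
  refine ⟨B, Finset.coe_subset.mp hBA, ?_, ?_, Set.smul_mem_smul_set (convexHull_mono hCB hwC)⟩
  · simpa using Finset.card_eq_finrank_add_one_of_affineIndependent hB hB_span
  -- `vectorSpan ℝ B` is `span (B -ᵥ B)` by definition, and `-ᵥ` on a vector space is `-`.
  · exact AffineSubspace.vectorSpan_eq_top_of_affineSpan_eq_top ℝ _ _ hB_span
end

section
/- Let S ⊆ ℕ^n be upward closed (s ∈ S and s ≤ u implies u ∈ S). Then E := ℕ^n \ S is a finite union of sets of the form {(x_1,...,x_n) : x_i ∈ ℕ for i ∈ I, x_j = r_j fixed for j ∉ I} for subsets I ⊆ {1,...,n} and fixed values r_j. -/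
/-! By Dickson's lemma an upper set `S` of `ℕⁿ` has finitely many minimal elements, all below
some `u`, so `x ∈ S ↔ x ⊓ u ∈ S`. Hence for `x ∉ S`, freezing the coordinates with `x j < u j`
and freeing the others gives a slab through `x` inside `Sᶜ`. Such a slab is determined by
`x ⊓ u ≤ u`, so there are only finitely many of them. -/

namespace UpperSetCompl

open Set

variable {ι α : Type*}

def slab (I : Set ι) (r : ι → α) : Set (ι → α) :=
  {x | ∀ j ∉ I, x j = r j}

theorem _root_.IsUpperSet.exists_inf_mem [Lattice α] [WellQuasiOrderedLE α] [Nonempty α]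
    {S : Set α} (hS : IsUpperSet S) : ∃ u, ∀ x ∈ S, x ⊓ u ∈ S := by
  have hpwo := isPWO_of_wellQuasiOrderedLE S
  have hmin : {b | Minimal (· ∈ S) b}.Finite :=
    (setOfPred_minimal_antichain _).finite_of_partiallyWellOrderedOn
      (hpwo.mono (setOfPred_minimal_subset _))
  obtain ⟨u, hu⟩ := hmin.bddAbove
  refine ⟨u, fun x hx => ?_⟩
  obtain ⟨b, hbx, hb⟩ := hpwo.exists_le_minimal hx
  exact hS (le_inf hbx (hu hb)) hb.prop

section LinearOrder

variable [LinearOrder α]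

def slabAt (u x : ι → α) : Set (ι → α) :=
  slab {j | u j ≤ x j} (x ⊓ u)

theorem mem_slabAt_self (u x : ι → α) : x ∈ slabAt u x := by
  intro j hj
  simp only [mem_ofPred_eq, not_le] at hj
  exact (min_eq_left hj.le).symm

theorem inf_le_of_mem_slabAt {u x z : ι → α} (hz : z ∈ slabAt u x) : z ⊓ u ≤ x := by
  intro j
  by_cases hj : u j ≤ x j
  · exact inf_le_right.trans hj
  · rw [Pi.inf_apply, hz j hj, Pi.inf_apply]
    exact inf_le_left.trans inf_le_left

theorem slabAt_subset_compl {S : Set (ι → α)} (hS : IsUpperSet S) {u : ι → α}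
    (hu : ∀ x ∈ S, x ⊓ u ∈ S) {x : ι → α} (hx : x ∉ S) : slabAt u x ⊆ Sᶜ :=
  fun _ hz hzS => hx (hS (inf_le_of_mem_slabAt hz) (hu _ hzS))

theorem compl_eq_biUnion_slabAt {S : Set (ι → α)} (hS : IsUpperSet S) {u : ι → α}
    (hu : ∀ x ∈ S, x ⊓ u ∈ S) : Sᶜ = ⋃ x ∈ Sᶜ, slabAt u x :=
  subset_antisymm (fun x hx => mem_biUnion hx (mem_slabAt_self u x))
    (iUnion₂_subset fun _ hx => slabAt_subset_compl hS hu hx)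

theorem finite_image_slabAtParams [Finite ι] [LocallyFiniteOrderBot α] (u : ι → α)
    (s : Set (ι → α)) : ((fun x => ({j | u j ≤ x j}, x ⊓ u)) '' s).Finite := by
  refine (finite_univ.prod (Finite.pi fun j => finite_Iic (u j))).subset ?_
  rintro _ ⟨x, -, rfl⟩
  exact ⟨mem_univ _, fun j _ => inf_le_right⟩

end LinearOrder

end UpperSetCompl

open Set UpperSetCompl in
/-- Mann's lemma, revisited: if `S ⊆ ℕⁿ` is upward closed, then
its complement is a finite union of "coordinate slabs": sets where the
coordinates outside some `I ⊆ {1,…,n}` are fixed and the rest range freely. -/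
theorem stmt15 (n : ℕ) (S : Set (Fin n → ℕ))
    (hS : ∀ s ∈ S, ∀ u, s ≤ u → u ∈ S) :
    ∃ (k : ℕ) (I : Fin k → Set (Fin n)) (r : Fin k → (Fin n → ℕ)),
      Sᶜ = ⋃ i, {x : Fin n → ℕ | ∀ j ∉ I i, x j = r i j} := by
  have hUpper : IsUpperSet S := fun s u hsu hs => hS s hs u hsu
  obtain ⟨u, hu⟩ := hUpper.exists_inf_mem
  obtain ⟨k, f, hf⟩ := (finite_image_slabAtParams u Sᶜ).fin_embedding
  refine ⟨k, fun i => (f i).1, fun i => (f i).2, ?_⟩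
  rw [compl_eq_biUnion_slabAt hUpper hu]
  calc ⋃ x ∈ Sᶜ, slabAt u x = ⋃ p ∈ range f, slab p.1 p.2 := by rw [hf, biUnion_image]; rfl
    _ = _ := biUnion_range
end

section
/- Let 0 ∈ B ⊆ A ⊂ ℤ^n with ⟨A⟩_ℤ = ℤ^n and B* = B\{0} consisting of n linearly independent vectors. Then there exist reals r_b ≥ 0 (b ∈ B*) such that every lattice point of the form ∑_{b∈B*} x_b b with all x_b ≥ r_b lies in P(A). -/
/-- Nonnegative integer combinations of the elements of a finite set of vectors. -/
def PV {n : ℕ} (A : Finset (Fin n → ℤ)) : Set (Fin n → ℤ) :=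
  {x | ∃ c : (Fin n → ℤ) → ℕ, ∑ a ∈ A, (c a : ℤ) • a = x}

/-- Coordinatewise cast of an integer vector to a real vector. -/
def castVec {n : ℕ} (v : Fin n → ℤ) : Fin n → ℝ := fun i => (v i : ℝ)

/-!
The lattice `L` spanned by `B*` has full rank, hence finite index in `ℤⁿ`; so `B*` is also a real
basis of `ℝⁿ`. As `A` generates `ℤⁿ` as a group and `ℤⁿ ⧸ L` is finite, the image of the monoid
`P(A)` in `ℤⁿ ⧸ L` is a submonoid of a finite group generating it, hence everything: every coset
of `L` has a representative in `P(A)`. Fix one for each coset. If the `B*`-coordinates of `x`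
dominate all coordinates of all representatives, then `x - y ∈ L` for the representative `y`
of its coset, and the integer coordinates of `x - y` are nonnegative, so `x ∈ y + P(B*) ⊆ P(A)`.
-/

open Module Submodule

lemma PV_eq_closure {n : ℕ} (A : Finset (Fin n → ℤ)) :
    PV A = (AddSubmonoid.closure (A : Set (Fin n → ℤ)) : Set (Fin n → ℤ)) := by
  ext x
  rw [SetLike.mem_coe, ← span_nat_eq_addSubmonoidClosure, mem_toAddSubmonoid, mem_span_finset]
  constructor
  · rintro ⟨c, rfl⟩
    exact ⟨fun a => if a ∈ A then c a else 0, fun a ha => by simp at ha; exact ha.1,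
      Finset.sum_congr rfl fun a ha => by simp [ha]⟩
  · rintro ⟨c, -, rfl⟩
    exact ⟨c, Finset.sum_congr rfl fun a _ => natCast_zsmul a (c a)⟩

theorem exists_finset_subset_closure_forall_sub_mem {G : Type*} [AddCommGroup G] {s : Set G}
    (hs : AddSubgroup.closure s = ⊤) (L : AddSubgroup G) [L.FiniteIndex] :
    ∃ R : Finset G, (R : Set G) ⊆ AddSubmonoid.closure s ∧ ∀ g, ∃ y ∈ R, g - y ∈ L := by
  have hsurj : ∀ q : G ⧸ L, ∃ y ∈ AddSubmonoid.closure s, (y : G ⧸ L) = q := by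
    intro q
    have : q ∈ (AddSubmonoid.closure s).map (QuotientAddGroup.mk' L) := by
      rw [AddMonoidHom.map_mclosure, ← AddSubgroup.closure_toAddSubmonoid_of_finite,
        ← AddMonoidHom.map_closure, hs,
        AddSubgroup.map_top_of_surjective _ (QuotientAddGroup.mk'_surjective L)]
      trivial
    simpa using this
  choose f hfS hf using hsurj
  classical
  have := Fintype.ofFinite (G ⧸ L)
  refine ⟨Finset.univ.image f, by simpa [Set.subset_def] using hfS, fun g => ⟨f g, by simp, ?_⟩⟩
  simpa [QuotientAddGroup.eq, neg_add_eq_sub] using hf g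

theorem finiteIndex_closure_of_card_eq_finrank {M : Type*} [AddCommGroup M]
    [Module.Free ℤ M] [Module.Finite ℤ M] {s : Finset M} (hs : LinearIndepOn ℤ id (s : Set M))
    (hcard : s.card = finrank ℤ M) : (AddSubgroup.closure (s : Set M)).FiniteIndex := by
  rw [← span_int_eq_addSubgroupClosure]
  have : Finite (M ⧸ (span ℤ (s : Set M)).toAddSubgroup) :=
    finiteQuotientOfFreeOfRankEq _ ((finrank_span_finset_eq_card hs).trans hcard)
  exact AddSubgroup.finiteIndex_of_finite_quotient

theorem AddMonoidHom.mem_span_image_of_finiteIndex {G V : Type*} [AddCommGroup G]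
    [AddCommGroup V] [Module ℝ V] (φ : G →+ V) {s : Set G} [(AddSubgroup.closure s).FiniteIndex]
    (g : G) : φ g ∈ span ℝ (φ '' s) := by
  set k := (AddSubgroup.closure s).index
  have hk : (k : ℝ) ≠ 0 := Nat.cast_ne_zero.mpr AddSubgroup.FiniteIndex.index_ne_zero
  have hclosure : (AddSubgroup.closure s).map φ ≤ (span ℝ (φ '' s)).toAddSubgroup := by
    rw [AddMonoidHom.map_closure, AddSubgroup.closure_le]
    exact subset_span
  have hkg : φ (k • g) ∈ span ℝ (φ '' s) :=
    hclosure ⟨k • g, AddSubgroup.nsmul_index_mem _ g, rfl⟩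
  rw [map_nsmul, ← Nat.cast_smul_eq_nsmul ℝ] at hkg
  simpa [hk] using smul_mem _ (k : ℝ)⁻¹ hkg

theorem exists_forall_le_repr_imp_mem {G V ι : Type*} [AddCommGroup G] [AddCommGroup V]
    [Module ℝ V] [Fintype ι] (φ : G →+ V) (b : Basis ι ℝ V) (β : ι → G)
    (hβ : ∀ i, φ (β i) = b i) {S : AddSubmonoid G} (hβS : ∀ i, β i ∈ S) {R : Finset G}
    (hRS : (R : Set G) ⊆ S) (hR : ∀ g, ∃ y ∈ R, g - y ∈ AddSubgroup.closure (Set.range β)) :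
    ∃ r : ℝ, 0 ≤ r ∧ ∀ g, (∀ i, r ≤ b.repr (φ g) i) → g ∈ S := by
  refine ⟨∑ y ∈ R, ∑ i, |b.repr (φ y) i|, by positivity, fun g hg => ?_⟩
  obtain ⟨y, hyR, hgy⟩ := hR g
  rw [← span_int_eq_addSubgroupClosure, mem_toAddSubgroup,
    mem_span_range_iff_exists_fun] at hgy
  obtain ⟨m, hm⟩ := hgy
  have hrepr : ∀ i, (m i : ℝ) = b.repr (φ g) i - b.repr (φ y) i := by
    have : φ (g - y) = ∑ i, (m i : ℝ) • b i := by
      simp [← hm, map_sum, map_zsmul, hβ, Int.cast_smul_eq_zsmul]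
    intro i
    rw [← Finsupp.sub_apply, ← map_sub, ← map_sub, this, b.repr_sum_self]
  have hyr : ∀ i, b.repr (φ y) i ≤ ∑ y ∈ R, ∑ i, |b.repr (φ y) i| := fun i =>
    calc b.repr (φ y) i ≤ |b.repr (φ y) i| := le_abs_self _
      _ ≤ ∑ i, |b.repr (φ y) i| :=
        Finset.single_le_sum (f := fun i => |b.repr (φ y) i|) (fun i _ => abs_nonneg _)
          (Finset.mem_univ i)
      _ ≤ ∑ y ∈ R, ∑ i, |b.repr (φ y) i| :=
        Finset.single_le_sum (f := fun y => ∑ i, |b.repr (φ y) i|)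
          (fun y _ => by positivity) hyR
  have hm0 : ∀ i, 0 ≤ m i := fun i => by
    exact_mod_cast (show (0 : ℝ) ≤ m i by linarith [hrepr i, hg i, hyr i])
  have hgyS : g - y ∈ S := by
    rw [← hm]
    refine sum_mem fun i _ => ?_
    rw [← Int.toNat_of_nonneg (hm0 i), natCast_zsmul]
    exact nsmul_mem (hβS i) _
  simpa using add_mem (hRS hyR) hgyS

def castVecHom (n : ℕ) : (Fin n → ℤ) →+ (Fin n → ℝ) := (Int.castAddHom ℝ).compLeft (Fin n)

@[simp]
lemma castVecHom_apply {n : ℕ} (v : Fin n → ℤ) : castVecHom n v = castVec v := rfl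

lemma castVec_single {n : ℕ} (i : Fin n) :
    castVec (Pi.single i 1 : Fin n → ℤ) = Pi.single i 1 := by
  ext j
  by_cases h : j = i <;> simp [castVec, h]

theorem top_le_span_range_castVec {n : ℕ} {s : Finset (Fin n → ℤ)}
    [(AddSubgroup.closure (s : Set (Fin n → ℤ))).FiniteIndex] :
    ⊤ ≤ span ℝ (Set.range fun v : s => castVec (v : Fin n → ℤ)) := by
  rw [← (Pi.basisFun ℝ (Fin n)).span_eq, span_le]
  rintro _ ⟨i, rfl⟩
  simpa [Set.image_eq_range, castVec_single] using
    (castVecHom n).mem_span_image_of_finiteIndex (s := s) (Pi.single i 1)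

theorem stmt17_general (n : ℕ) (A B : Finset (Fin n → ℤ))
    (hBA : B ⊆ A)
    (hspan : Submodule.span ℤ (A : Set (Fin n → ℤ)) = ⊤)
    (hcard : (B.erase 0).card = n)
    (hind : ∀ c : (Fin n → ℤ) → ℤ,
      ∑ v ∈ B.erase 0, c v • v = 0 → ∀ v ∈ B.erase 0, c v = 0) :
    ∃ r : (Fin n → ℤ) → ℝ, (∀ v ∈ B.erase 0, 0 ≤ r v) ∧
      ∀ (x : Fin n → ℤ) (c : (Fin n → ℤ) → ℝ),
        (∀ v ∈ B.erase 0, r v ≤ c v) →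
        castVec x = ∑ v ∈ B.erase 0, c v • castVec v →
        x ∈ PV A := by
  set s := B.erase 0
  have : (AddSubgroup.closure (s : Set (Fin n → ℤ))).FiniteIndex :=
    finiteIndex_closure_of_card_eq_finrank (linearIndepOn_finset_iff.mpr (by simpa using hind))
      (by simpa using hcard)
  obtain ⟨R, hRS, hR⟩ := exists_finset_subset_closure_forall_sub_mem (s := (A : Set _))
    (by rw [← span_int_eq_addSubgroupClosure, hspan]; rfl)
    (AddSubgroup.closure (s : Set (Fin n → ℤ)))
  let b := basisOfTopLeSpanOfCardEqFinrank (fun v : s => castVec (v : Fin n → ℤ))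
    top_le_span_range_castVec (by simp [hcard])
  obtain ⟨r, hr0, hr⟩ := exists_forall_le_repr_imp_mem (castVecHom n) b
    Subtype.val (by simp [b]) (S := AddSubmonoid.closure A)
    (fun v => AddSubmonoid.subset_closure (hBA (Finset.mem_of_mem_erase v.2))) hRS
    (by simpa using hR)
  refine ⟨fun _ => r, fun _ _ => hr0, fun x c hc hx => ?_⟩
  have hrepr : ∀ v : s, b.repr (castVec x) v = c v := by
    have hb : ∀ v : s, castVec (v : Fin n → ℤ) = b v := by simp [b]
    simp_rw [hx, ← Finset.sum_coe_sort s, hb, b.repr_sum_self, implies_true]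
  rw [PV_eq_closure]
  exact hr x fun v => hrepr v ▸ hc v v.2

/-- With `0 ∈ B ⊆ A ⊂ ℤⁿ`, `A` generating `ℤⁿ`, and `B* = B\{0}`
consisting of `n` linearly independent vectors, there are reals `r_b ≥ 0` such
that every lattice point `∑_{b ∈ B*} x_b b` with all `x_b ≥ r_b` lies in `P(A)`. -/
theorem stmt17 (n : ℕ) (A B : Finset (Fin n → ℤ)) (h0 : (0 : Fin n → ℤ) ∈ B)
    (hBA : B ⊆ A)
    (hspan : Submodule.span ℤ (A : Set (Fin n → ℤ)) = ⊤)
    (hcard : (B.erase 0).card = n)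
    (hind : ∀ c : (Fin n → ℤ) → ℤ,
      ∑ v ∈ B.erase 0, c v • v = 0 → ∀ v ∈ B.erase 0, c v = 0) :
    ∃ r : (Fin n → ℤ) → ℝ, (∀ v ∈ B.erase 0, 0 ≤ r v) ∧
      ∀ (x : Fin n → ℤ) (c : (Fin n → ℤ) → ℝ),
        (∀ v ∈ B.erase 0, r v ≤ c v) →
        castVec x = ∑ v ∈ B.erase 0, c v • castVec v →
        x ∈ PV A :=
  stmt17_general n A B hBA hspan hcard hind
end

section
/- Let 0 ∈ A ⊂ ℤ^n with ⟨A⟩_ℤ = ℤ^n. Then there exists N_A such that for all N ≥ N_A, NA = (N·H(A) ∩ ℤ^n) \ (E(A) ∪ ⋃_{a∈A}(Na - E(a-A))), where E(S) := (C_S ∩ ℤ^n) \ P(S), C_S is the cone of nonnegative real combinations of S, and H(A) is the convex hull of A. -/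
open Pointwise

/-- The `N`-fold sumset of a set of integer vectors. -/
def nfoldV {n : ℕ} (A : Set (Fin n → ℤ)) (N : ℕ) : Set (Fin n → ℤ) :=
  {x | ∃ f : Fin N → (Fin n → ℤ), (∀ i, f i ∈ A) ∧ ∑ i, f i = x}

/-- The cone of nonnegative real combinations of a finite set of integer vectors. -/
def coneV {n : ℕ} (A : Finset (Fin n → ℤ)) : Set (Fin n → ℝ) :=
  {x | ∃ c : (Fin n → ℤ) → ℝ, (∀ a ∈ A, 0 ≤ c a) ∧ ∑ a ∈ A, c a • castVec a = x}

/-- The exceptional set: lattice points of the cone not representable. -/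
def EV {n : ℕ} (A : Finset (Fin n → ℤ)) : Set (Fin n → ℤ) :=
  {x | castVec x ∈ coneV A ∧ x ∉ PV A}

/-!
Write `x ∈ N • H(A)` as `x = ∑ μ_l l` with `μ ≥ 0`, `∑ μ_l = N`, and let `a` carry the largest
weight, so `μ_a ≥ N / |A|`. Then `y = N a - x = ∑ μ_l (a - l)` lies in the cone of `a - A`, and
unless `x` is excluded, `y ∈ P(a - A)`, say `y = ∑ e_b b`. Rounding the weights down leaves a
remainder `y - ∑ ⌊μ_l⌋ (a - l)` in a fixed finite box. By Dickson's lemma, for each `r` in the box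
the pairs `(p, q)` of counts with `∑ (p_b - q_b) b = r` have finitely many minimal elements;
replacing `(e, ⌊μ⌋)` by a minimal pair below it writes `y` with at most `∑_{l ≠ a} μ_l + K`
summands, `K` depending only on `A`. This is `≤ N` once `N ≥ |A| K`, and padding with copies
of `a` puts `x` in `N A`.
-/

variable {n : ℕ}

section castVec

lemma castVec_injective : Function.Injective (castVec (n := n)) :=
  fun _ _ h => funext fun i => Int.cast_injective (congrFun h i)

@[simp] lemma castVec_zero : castVec (0 : Fin n → ℤ) = 0 := by
  funext i; simp [castVec]

@[simp] lemma castVec_sub (v w : Fin n → ℤ) : castVec (v - w) = castVec v - castVec w := by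
  funext i; simp [castVec]

@[simp] lemma castVec_nsmul (k : ℕ) (v : Fin n → ℤ) : castVec (k • v) = (k : ℝ) • castVec v := by
  funext i; simp [castVec]

lemma castVec_sum {ι : Type*} (s : Finset ι) (v : ι → Fin n → ℤ) :
    castVec (∑ i ∈ s, v i) = ∑ i ∈ s, castVec (v i) := by
  funext i; simp [castVec, Finset.sum_apply]

end castVec

section nfoldV

variable {A : Set (Fin n → ℤ)} {x y a : Fin n → ℤ} {M N : ℕ}

lemma zero_mem_nfoldV_zero : (0 : Fin n → ℤ) ∈ nfoldV A 0 :=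
  ⟨Fin.elim0, Fin.rec0, by simp⟩

lemma add_mem_nfoldV (hx : x ∈ nfoldV A M) (hy : y ∈ nfoldV A N) : x + y ∈ nfoldV A (M + N) := by
  obtain ⟨f, hf, rfl⟩ := hx
  obtain ⟨g, hg, rfl⟩ := hy
  exact ⟨Fin.append f g, Fin.addCases (by simpa using hf) (by simpa using hg),
    by simp [Fin.sum_univ_add]⟩

lemma nsmul_mem_nfoldV (ha : a ∈ A) (k : ℕ) : k • a ∈ nfoldV A k :=
  ⟨fun _ => a, fun _ => ha, by simp⟩

lemma sum_nsmul_mem_nfoldV {ι : Type*} (s : Finset ι) (c : ι → ℕ) {v : ι → Fin n → ℤ}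
    (hv : ∀ i ∈ s, v i ∈ A) : ∑ i ∈ s, c i • v i ∈ nfoldV A (∑ i ∈ s, c i) := by
  classical
  induction s using Finset.induction_on with
  | empty => simpa using zero_mem_nfoldV_zero
  | insert i s hi ih =>
    rw [Finset.sum_insert hi, Finset.sum_insert hi]
    exact add_mem_nfoldV (nsmul_mem_nfoldV (hv i (Finset.mem_insert_self i s)) _)
      (ih fun j hj => hv j (Finset.mem_insert_of_mem hj))

lemma add_nsmul_mem_nfoldV (hx : x ∈ nfoldV A M) (ha : a ∈ A) (hMN : M ≤ N) :
    x + (N - M) • a ∈ nfoldV A N := by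
  simpa [Nat.add_sub_cancel' hMN] using add_mem_nfoldV hx (nsmul_mem_nfoldV ha (N - M))

end nfoldV

lemma nfoldV_subset_PV (A : Finset (Fin n → ℤ)) {N : ℕ} : nfoldV (↑A) N ⊆ PV A := by
  rintro _ ⟨f, hf, rfl⟩
  refine ⟨fun a => (Finset.univ.filter (f · = a)).card, ?_⟩
  rw [← Finset.sum_fiberwise_of_maps_to (fun i _ => hf i)]
  refine Finset.sum_congr rfl fun a _ => ?_
  rw [Finset.sum_congr rfl fun i hi => (Finset.mem_filter.mp hi).2]
  simp

lemma nsmul_sub_mem_nfoldV_image [DecidableEq (Fin n → ℤ)] {A : Finset (Fin n → ℤ)}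
    (a : Fin n → ℤ) {N : ℕ} {x : Fin n → ℤ} (hx : x ∈ nfoldV (↑A) N) :
    N • a - x ∈ nfoldV ↑(A.image (a - ·)) N := by
  obtain ⟨f, hf, rfl⟩ := hx
  exact ⟨fun i => a - f i, fun i => Finset.mem_image_of_mem _ (hf i), by simp⟩

lemma image_sub_image_sub [DecidableEq (Fin n → ℤ)] (A : Finset (Fin n → ℤ)) (a : Fin n → ℤ) :
    (A.image (a - ·)).image (a - ·) = A := by
  simp [Finset.image_image]

lemma castVec_mem_smul_convexHull {A : Set (Fin n → ℤ)} {N : ℕ} {x : Fin n → ℤ} (hN : N ≠ 0)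
    (hx : x ∈ nfoldV A N) : castVec x ∈ (N : ℝ) • convexHull ℝ (castVec '' A) := by
  obtain ⟨f, hf, rfl⟩ := hx
  have hmass : (Finset.univ : Finset (Fin N)).centerMass (fun _ => (1 : ℝ)) (castVec ∘ f) ∈
      convexHull ℝ (castVec '' A) :=
    Finset.centerMass_mem_convexHull _ (fun _ _ => zero_le_one) (by simp [Nat.pos_of_ne_zero hN])
      fun i _ => Set.mem_image_of_mem _ (hf i)
  convert Set.smul_mem_smul_set (a := (N : ℝ)) hmass using 1
  simp [Finset.centerMass, castVec_sum, smul_smul, hN]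

lemma exists_weights_of_mem_smul_convexHull {A : Finset (Fin n → ℤ)} {N : ℕ} {v : Fin n → ℝ}
    (hv : v ∈ (N : ℝ) • convexHull ℝ (castVec '' (A : Set (Fin n → ℤ)))) :
    ∃ μ : (Fin n → ℤ) → ℝ, (∀ l ∈ A, 0 ≤ μ l) ∧ ∑ l ∈ A, μ l = N ∧
      v = ∑ l ∈ A, μ l • castVec l := by
  obtain ⟨z, hz, rfl⟩ := Set.mem_smul_set.mp hv
  rw [← Finset.coe_image] at hz
  obtain ⟨w, hw0, hw1, rfl⟩ := Finset.mem_convexHull'.mp hz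
  rw [Finset.sum_image castVec_injective.injOn] at hw1 ⊢
  refine ⟨fun l => N * w (castVec l), fun l hl => ?_, ?_, ?_⟩
  · exact mul_nonneg N.cast_nonneg (hw0 _ (Finset.mem_image_of_mem _ hl))
  · rw [← Finset.mul_sum, hw1, mul_one]
  · simp [Finset.smul_sum, smul_smul]

lemma exists_finset_le_of_wellQuasiOrderedLE {α : Type*} [PartialOrder α] [WellQuasiOrderedLE α]
    (Z : Set α) : ∃ F : Finset α, ↑F ⊆ Z ∧ ∀ z ∈ Z, ∃ z' ∈ F, z' ≤ z := by
  have hfin := WellQuasiOrderedLE.finite_of_isAntichain (setOfPred_minimal_antichain (· ∈ Z))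
  refine ⟨hfin.toFinset, by simpa using setOfPred_minimal_subset Z, fun z hz => ?_⟩
  obtain ⟨z', hz'z, hz'⟩ := (Set.isPWO_of_wellQuasiOrderedLE Z).exists_le_minimal hz
  exact ⟨z', by simpa using hz', hz'z⟩

lemma abs_sub_sum_floor_smul_le {B : Finset (Fin n → ℤ)} {ν : (Fin n → ℤ) → ℝ}
    (hν : ∀ b ∈ B, 0 ≤ ν b) {y : Fin n → ℤ} (hy : castVec y = ∑ b ∈ B, ν b • castVec b)
    (i : Fin n) : |(y - ∑ b ∈ B, ⌊ν b⌋₊ • b) i| ≤ ∑ b ∈ B, |b i| := by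
  have hyi : (y i : ℝ) = ∑ b ∈ B, ν b * b i := by
    simpa [castVec, Finset.sum_apply] using congrFun hy i
  have hfrac : ((y - ∑ b ∈ B, ⌊ν b⌋₊ • b) i : ℝ) = ∑ b ∈ B, (ν b - ⌊ν b⌋₊) * b i := by
    simp [Finset.sum_apply, hyi, sub_mul]
  have : |((y - ∑ b ∈ B, ⌊ν b⌋₊ • b) i : ℝ)| ≤ ∑ b ∈ B, |(b i : ℝ)| := by
    rw [hfrac]
    refine (Finset.abs_sum_le_sum_abs _ _).trans (Finset.sum_le_sum fun b hb => ?_)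
    rw [abs_mul, abs_of_nonneg (sub_nonneg.mpr (Nat.floor_le (hν b hb)))]
    exact mul_le_of_le_one_left (abs_nonneg _) (by linarith [Nat.lt_floor_add_one (ν b)])
  exact_mod_cast this

def HasShortRepresentations (B : Finset (Fin n → ℤ)) (K : ℕ) : Prop :=
  ∀ y ∈ PV B, ∀ ν : (Fin n → ℤ) → ℝ, (∀ b ∈ B, 0 ≤ ν b) →
    castVec y = ∑ b ∈ B, ν b • castVec b → ∃ D : ℕ, (D : ℝ) ≤ ∑ b ∈ B, ν b + K ∧ y ∈ nfoldV ↑B D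

lemma exists_sum_le_of_sum_sub_mem {ι G : Type*} [Fintype ι] [AddCommGroup G] (v : ι → G)
    {R : Set G} (hR : R.Finite) :
    ∃ K : ℕ, ∀ e m : ι → ℕ, ∑ i, e i • v i - ∑ i, m i • v i ∈ R →
      ∃ d : ι → ℕ, ∑ i, d i • v i = ∑ i, e i • v i ∧ ∑ i, d i ≤ ∑ i, m i + K := by
  let Z (r : G) : Set ((ι → ℕ) × (ι → ℕ)) := {z | ∑ i, z.1 i • v i - ∑ i, z.2 i • v i = r}
  choose F hFZ hF using fun r => exists_finset_le_of_wellQuasiOrderedLE (Z r)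
  refine ⟨hR.toFinset.sup fun r => (F r).sup fun z => ∑ i, z.1 i, fun e m hem => ?_⟩
  obtain ⟨⟨p, q⟩, hpq, hle⟩ := hF _ (e, m) rfl
  have hqm : ∀ i, q i ≤ m i := hle.2
  refine ⟨fun i => m i - q i + p i, ?_, ?_⟩
  · have hpqr : ∑ i, p i • v i - ∑ i, q i • v i = ∑ i, e i • v i - ∑ i, m i • v i := hFZ _ hpq
    simp only [add_nsmul, sub_nsmul _ (hqm _), Finset.sum_add_distrib, ← sub_eq_add_neg,
      Finset.sum_sub_distrib]
    rw [← sub_add_cancel (∑ i, e i • v i) (∑ i, m i • v i), ← hpqr]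
    abel
  · have hp : ∑ i, p i ≤ hR.toFinset.sup fun r => (F r).sup fun z => ∑ i, z.1 i :=
      (Finset.le_sup (f := fun z => ∑ i, z.1 i) hpq).trans
        (Finset.le_sup (f := fun r => (F r).sup fun z => ∑ i, z.1 i) (hR.mem_toFinset.mpr hem))
    calc ∑ i, (m i - q i + p i) ≤ ∑ i, (m i + p i) := Finset.sum_le_sum fun i _ => by omega
      _ ≤ _ := by rw [Finset.sum_add_distrib]; omega

theorem exists_hasShortRepresentations (B : Finset (Fin n → ℤ)) :
    ∃ K, HasShortRepresentations B K := by
  let C : Fin n → ℤ := fun i => ∑ b ∈ B, |b i|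
  obtain ⟨K, hK⟩ := exists_sum_le_of_sum_sub_mem (fun b : B => (b : Fin n → ℤ))
    (Finset.Icc (-C) C).finite_toSet
  refine ⟨K, ?_⟩
  rintro y ⟨e, rfl⟩ ν hν hy
  have hbox := abs_sub_sum_floor_smul_le hν hy
  obtain ⟨d, hdy, hdK⟩ := hK (fun b => e b) (fun b => ⌊ν b⌋₊) (by
    simp only [Finset.coe_Icc, Set.mem_Icc, Finset.sum_coe_sort B (fun b => e b • b),
      Finset.sum_coe_sort B (fun b => ⌊ν b⌋₊ • b)]
    exact ⟨fun i => neg_le_of_abs_le (hbox i), fun i => le_of_abs_le (hbox i)⟩)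
  refine ⟨∑ b, d b, ?_, ?_⟩
  · have hm : ((∑ b : B, ⌊ν b⌋₊ : ℕ) : ℝ) ≤ ∑ b ∈ B, ν b := by
      rw [← Finset.sum_coe_sort B ν]
      push_cast
      exact Finset.sum_le_sum fun b _ => Nat.floor_le (hν b b.2)
    calc ((∑ b, d b : ℕ) : ℝ) ≤ (∑ b : B, ⌊ν b⌋₊ : ℕ) + K := by exact_mod_cast hdK
      _ ≤ _ := by linarith
  · convert sum_nsmul_mem_nfoldV Finset.univ d fun (b : B) _ => b.2 using 1
    rw [hdy, Finset.sum_coe_sort B (fun b => e b • b)]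
    simp only [natCast_zsmul]

lemma mem_nfoldV_of_nsmul_sub_notMem_EV [DecidableEq (Fin n → ℤ)] {A : Finset (Fin n → ℤ)}
    {a : Fin n → ℤ} (ha : a ∈ A) {K : ℕ} (hK : HasShortRepresentations (A.image (a - ·)) K)
    {N : ℕ} {x : Fin n → ℤ} {μ : (Fin n → ℤ) → ℝ} (hμ0 : ∀ l ∈ A, 0 ≤ μ l)
    (hμN : ∑ l ∈ A, μ l = N) (hx : castVec x = ∑ l ∈ A, μ l • castVec l) (hKμ : (K : ℝ) ≤ μ a)
    (hE : N • a - x ∉ EV (A.image (a - ·))) : x ∈ nfoldV (↑A) N := by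
  set y := N • a - x with hy
  have hinj : Set.InjOn (a - ·) A := (sub_right_injective (b := a)).injOn
  -- dropping the weight of `a` (whose term `a - a` vanishes) is what brings the count below `N`
  let ν : (Fin n → ℤ) → ℝ := fun b => if b = 0 then 0 else μ (a - b)
  have hνl (l : Fin n → ℤ) : ν (a - l) = if l = a then 0 else μ l := by
    simp [ν, sub_eq_zero, eq_comm]
  have hν0 : ∀ b ∈ A.image (a - ·), 0 ≤ ν b := by
    simp only [Finset.mem_image]
    rintro _ ⟨l, hl, rfl⟩
    rw [hνl]
    split_ifs
    exacts [le_rfl, hμ0 l hl]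
  have hνsum : ∑ b ∈ A.image (a - ·), ν b = N - μ a := by
    rw [Finset.sum_image hinj]
    simp_rw [hνl]
    rw [← hμN, ← Finset.sum_erase_eq_sub ha, ← Finset.filter_ne', Finset.sum_filter]
    exact Finset.sum_congr rfl fun l _ => by split_ifs <;> simp_all
  have hyν : castVec y = ∑ b ∈ A.image (a - ·), ν b • castVec b := by
    rw [Finset.sum_image hinj]
    calc castVec y = ∑ l ∈ A, μ l • castVec (a - l) := by
          rw [hy, castVec_sub, castVec_nsmul, hx, ← hμN, Finset.sum_smul, ← Finset.sum_sub_distrib]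
          simp only [castVec_sub, smul_sub]
      _ = _ := Finset.sum_congr rfl fun l _ => by rw [hνl]; split_ifs with h <;> simp [h]
  have hyP : y ∈ PV (A.image (a - ·)) := by
    by_contra h
    exact hE ⟨⟨ν, hν0, hyν.symm⟩, h⟩
  obtain ⟨D, hD, hyD⟩ := hK y hyP ν hν0 hyν
  have hDN : D ≤ N := by exact_mod_cast (by linarith : (D : ℝ) ≤ N)
  have hxD := add_nsmul_mem_nfoldV
    (by simpa only [image_sub_image_sub] using nsmul_sub_mem_nfoldV_image a hyD) ha hDN
  obtain ⟨k, rfl⟩ := Nat.exists_eq_add_of_le hDN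
  convert hxD using 1
  rw [hy, add_nsmul, Nat.add_sub_cancel_left]
  abel

theorem stmt18_general (n : ℕ) (A : Finset (Fin n → ℤ)) :
    ∃ NA : ℕ, ∀ N : ℕ, NA ≤ N →
      nfoldV (↑A) N =
        {x : Fin n → ℤ |
            castVec x ∈ (N : ℝ) • convexHull ℝ (castVec '' (A : Set (Fin n → ℤ)))} \
          (EV A ∪ ⋃ a ∈ A, (fun e => N • a - e) '' EV (A.image (fun a' => a - a'))) := by
  choose K hK using fun a : Fin n → ℤ => exists_hasShortRepresentations (A.image (a - ·))
  refine ⟨A.card * A.sup K + 1, fun N hN => Set.Subset.antisymm ?_ ?_⟩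
  · intro x hx
    refine ⟨castVec_mem_smul_convexHull (by omega) hx, ?_⟩
    rintro (⟨-, hxP⟩ | hxE)
    · exact hxP (nfoldV_subset_PV A hx)
    · obtain ⟨a, -, e, ⟨-, heP⟩, rfl⟩ := by simpa using hxE
      exact heP (nfoldV_subset_PV _ (by simpa using nsmul_sub_mem_nfoldV_image a hx))
  · rintro x ⟨hhull, hexc⟩
    obtain ⟨μ, hμ0, hμN, hx⟩ := exists_weights_of_mem_smul_convexHull hhull
    obtain ⟨a, ha, hKa⟩ : ∃ a ∈ A, ((A.sup K : ℕ) : ℝ) ≤ μ a := by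
      refine Finset.exists_le_of_sum_le
        (Finset.nonempty_of_sum_ne_zero (by rw [hμN]; exact_mod_cast (by omega : N ≠ 0))) ?_
      rw [Finset.sum_const, nsmul_eq_mul, hμN]
      exact_mod_cast (by omega : A.card * A.sup K ≤ N)
    refine mem_nfoldV_of_nsmul_sub_notMem_EV ha (hK a) hμ0 hμN hx
      ((Nat.cast_le.mpr (Finset.le_sup ha)).trans hKa) fun hE => hexc (Or.inr ?_)
    exact Set.mem_iUnion₂.mpr ⟨a, ha, _, hE, sub_sub_cancel _ _⟩

/-- Theorem 2: For `0 ∈ A ⊂ ℤⁿ` generating `ℤⁿ`, there is `N_A`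
such that for all `N ≥ N_A`,
`NA = (N·H(A) ∩ ℤⁿ) \ (E(A) ∪ ⋃_{a ∈ A} (N·a - E(a-A)))`. -/
theorem stmt18 (n : ℕ) (A : Finset (Fin n → ℤ)) (h0 : (0 : Fin n → ℤ) ∈ A)
    (hspan : Submodule.span ℤ (A : Set (Fin n → ℤ)) = ⊤) :
    ∃ NA : ℕ, ∀ N : ℕ, NA ≤ N →
      nfoldV (↑A) N =
        {x : Fin n → ℤ |
            castVec x ∈ (N : ℝ) • convexHull ℝ (castVec '' (A : Set (Fin n → ℤ)))} \
          (EV A ∪ ⋃ a ∈ A, (fun e => N • a - e) '' EV (A.image (fun a' => a - a'))) :=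
  stmt18_general n A
end
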